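/- Assume b₀ + b₁ ≥ 1, A₁ = 0 and A := A₀ ≥ 3, and let μ be the ghost measure of f. Set σ(∞) = f(1) + (b₀+b₁)/(A−2). Then μ({0}) = (f(1) + b₀/(A−1)) / σ(∞), and for every dyadic rational x = m/2^n ∈ (0,1) with m odd and n ≥ 1, μ({x}) = (1/σ(∞)) · ( b₁/A^n + b₀/(A^n·(A−1)) ). -/

import Mathlib

/-!
As `A₁ = 0`, `f (2n+1) = b₁`, and then `f (2^M c + i)` with `0 < i < 2^M` does not depend on
`c ≥ 1`. Around a dyadic point `x = k / 2^N` with `2^(N-p) ∣ k`, the approximant `μ_N` therefore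
puts mass at most `2 Σ(N-p) / Σ(N) ≤ 2 / A^p` on the punctured ball of radius `2^(-p)`,
while the atom itself carries `f (2^(N-n) (2^n + j)) / Σ(N)` when `x = j / 2^n`. Numerator and
denominator satisfy affine recurrences of growth rate `A`, so the atom converges to
`(f (2^n + j) + b₀/(A-1)) / (A^n σ(∞))`. By the portmanteau theorem, the limit of the atoms
bounds `μ {x}` from below (`{x}` is closed) and, up to the window mass, from above (balls are open).
-/

open MeasureTheory Filter Topology

/-- The `N`-th approximant to the ghost measure of `f`: the normalised Dirac comb built from
the values of `f` on the fundamental region `[2^N, 2^(N+1))`. -/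
noncomputable def ghostApprox (f : ℕ → ℕ) (N : ℕ) : Measure ℝ :=
  (∑ n ∈ Finset.range (2 ^ N), (f (2 ^ N + n) : ENNReal))⁻¹ •
    ∑ n ∈ Finset.range (2 ^ N), (f (2 ^ N + n) : ENNReal) • Measure.dirac ((n : ℝ) / 2 ^ N)

/-- Weak (vague) convergence of a sequence of finite measures on `ℝ`. -/
def WeakLimit (μs : ℕ → Measure ℝ) (μ : Measure ℝ) : Prop :=
  ∀ g : BoundedContinuousFunction ℝ ℝ,
    Tendsto (fun N => ∫ x, g x ∂(μs N)) atTop (𝓝 (∫ x, g x ∂μ))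

open Finset Metric
open scoped ENNReal

theorem measure_singleton_eq_of_weakLimit {μs : ℕ → Measure ℝ}
    [∀ N, IsProbabilityMeasure (μs N)] {μ : Measure ℝ} [IsProbabilityMeasure μ]
    (hlim : WeakLimit μs μ) {x : ℝ} {L : ℝ≥0∞}
    (hatom : Tendsto (fun N => μs N {x}) atTop (𝓝 L))
    (hnear : ∀ ε : ℝ≥0∞, 0 < ε →
      ∃ r > 0, ∀ᶠ N in atTop, μs N (ball x r) ≤ μs N {x} + ε) :
    μ {x} = L := by
  let ν : ProbabilityMeasure ℝ := ⟨μ, inferInstance⟩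
  let νs : ℕ → ProbabilityMeasure ℝ := fun N => ⟨μs N, inferInstance⟩
  have hν : Tendsto νs atTop (𝓝 ν) :=
    ProbabilityMeasure.tendsto_iff_forall_integral_tendsto.2 hlim
  apply le_antisymm
  · refine ENNReal.le_of_forall_pos_le_add fun ε hε _ => ?_
    obtain ⟨r, hr, hN⟩ := hnear ε (by positivity)
    calc μ {x} ≤ μ (ball x r) := measure_mono (by simpa using hr)
      _ ≤ liminf (fun N => μs N (ball x r)) atTop :=
        ProbabilityMeasure.le_liminf_measure_open_of_tendsto hν isOpen_ball
      _ ≤ liminf (fun N => μs N {x} + ε) atTop := liminf_le_liminf hN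
      _ = L + ε := (hatom.add tendsto_const_nhds).liminf_eq
  · calc L = limsup (fun N => μs N {x}) atTop := hatom.limsup_eq.symm
      _ ≤ μ {x} := ProbabilityMeasure.limsup_measure_closed_le_of_tendsto hν isClosed_singleton

lemma tendsto_div_pow_of_rec {u : ℕ → ℝ} {a b r : ℝ} (hr : 0 ≤ r) (hra : r < a)
    (hu : ∀ t, u (t + 1) = a * u t + b * r ^ t) :
    Tendsto (fun t => u t / a ^ t) atTop (𝓝 (u 0 + b / (a - r))) := by
  have ha : 0 < a := hr.trans_lt hra
  have har : a - r ≠ 0 := (sub_pos.2 hra).ne'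
  have hclosed : ∀ t, u t = a ^ t * (u 0 + b / (a - r)) - r ^ t * (b / (a - r)) := by
    intro t
    induction t with
    | zero => simp
    | succ t ih => rw [hu, ih]; field_simp; ring
  have hgeom : Tendsto (fun t => (r / a) ^ t) atTop (𝓝 0) :=
    tendsto_pow_atTop_nhds_zero_of_lt_one (div_nonneg hr ha.le) ((div_lt_one ha).2 hra)
  have hlim := (hgeom.const_mul (b / (a - r))).const_sub (u 0 + b / (a - r))
  rw [mul_zero, sub_zero] at hlim
  refine hlim.congr fun t => ?_
  rw [hclosed t, div_pow]
  field_simp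

lemma sum_range_two_mul {M : Type*} [AddCommMonoid M] (g : ℕ → M) (n : ℕ) :
    ∑ k ∈ range (2 * n), g k = ∑ j ∈ range n, (g (2 * j) + g (2 * j + 1)) := by
  induction n with
  | zero => simp
  | succ n ih =>
    rw [mul_add_one, sum_range_succ, sum_range_succ, ih, sum_range_succ, add_assoc]

lemma natCast_mul_two_pow_sub_div {n N : ℕ} (h : n ≤ N) (j : ℕ) :
    ((j * 2 ^ (N - n) : ℕ) : ℝ) / 2 ^ N = j / 2 ^ n := by
  rw [← pow_sub_mul_pow (2 : ℝ) h]
  push_cast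
  field_simp

lemma mul_two_pow_sub_lt {n N j : ℕ} (hj : j < 2 ^ n) (h : n ≤ N) : j * 2 ^ (N - n) < 2 ^ N := by
  rw [← Nat.sub_add_cancel h, pow_add, Nat.add_sub_cancel, mul_comm (2 ^ (N - n))]
  exact Nat.mul_lt_mul_of_pos_right hj (by positivity)

/-- The normaliser `Σ(N)` of the `N`-th approximant. -/
def ghostMass (f : ℕ → ℕ) (N : ℕ) : ℕ := ∑ k ∈ range (2 ^ N), f (2 ^ N + k)

lemma ghostApprox_apply (f : ℕ → ℕ) (N : ℕ) (s : Set ℝ) [DecidablePred (· ∈ s)] :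
    ghostApprox f N s =
      ((∑ k ∈ range (2 ^ N) with ((k : ℕ) : ℝ) / 2 ^ N ∈ s, f (2 ^ N + k) : ℕ) : ℝ≥0∞)
        / ghostMass f N := by
  simp [ghostApprox, ghostMass, Measure.dirac_apply, Set.indicator, sum_filter,
    div_eq_mul_inv, mul_comm]

lemma ghostApprox_singleton (f : ℕ → ℕ) {N k : ℕ} (hk : k < 2 ^ N) :
    ghostApprox f N {(k : ℝ) / 2 ^ N} = (f (2 ^ N + k) : ℝ≥0∞) / ghostMass f N := by
  have hfilter :
      {j ∈ range (2 ^ N) | ((j : ℕ) : ℝ) / 2 ^ N ∈ ({(k : ℝ) / 2 ^ N} : Set ℝ)} = {k} := by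
    ext j
    simp [hk]
  rw [ghostApprox_apply, hfilter, sum_singleton]

lemma ghostApprox_ball_le (f : ℕ → ℕ) (N k q : ℕ) :
    ghostApprox f N (ball ((k : ℝ) / 2 ^ N) ((q : ℝ) / 2 ^ N)) ≤
      ((∑ j ∈ Ico (k + 1 - q) (k + q), f (2 ^ N + j) : ℕ) : ℝ≥0∞) / ghostMass f N := by
  classical
  rw [ghostApprox_apply]
  refine ENNReal.div_le_div_right (Nat.cast_le.2 (sum_le_sum_of_subset fun j hj => ?_)) _
  rw [mem_filter, mem_ball, Real.dist_eq, ← sub_div, abs_div,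
    abs_of_pos (a := (2 : ℝ) ^ N) (by positivity), div_lt_div_iff_of_pos_right (by positivity),
    abs_sub_lt_iff] at hj
  obtain ⟨-, h₁, h₂⟩ := hj
  have h₁' : j < k + q := by exact_mod_cast (sub_lt_iff_lt_add'.1 h₁)
  have h₂' : k < j + q := by exact_mod_cast (sub_lt_iff_lt_add'.1 h₂)
  rw [mem_Ico]
  omega

lemma isProbabilityMeasure_ghostApprox {f : ℕ → ℕ} {N : ℕ} (h : ghostMass f N ≠ 0) :
    IsProbabilityMeasure (ghostApprox f N) := by
  constructor
  rw [ghostApprox_apply, filter_true_of_mem fun _ _ => Set.mem_univ _]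
  exact ENNReal.div_self (by exact_mod_cast h) (ENNReal.natCast_ne_top _)

lemma tendsto_f_two_pow_mul_div_pow {f : ℕ → ℕ} {A b₀ : ℕ}
    (heven : ∀ n, 1 ≤ n → f (2 * n) = A * f n + b₀) (hA : 1 < A) {s : ℕ} (hs : 1 ≤ s) :
    Tendsto (fun t => (f (2 ^ t * s) : ℝ) / (A : ℝ) ^ t) atTop
      (𝓝 (f s + (b₀ : ℝ) / (A - 1))) := by
  have hA' : (1 : ℝ) < A := by exact_mod_cast hA
  convert tendsto_div_pow_of_rec (u := fun t => (f (2 ^ t * s) : ℝ)) (b := b₀) zero_le_one hA'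
    (fun t => ?_) using 3
  · simp
  · rw [pow_succ', mul_assoc, heven _ (Nat.mul_pos (by positivity) hs)]
    push_cast
    ring

section GhostAtoms

variable {f : ℕ → ℕ} {A b₀ b₁ : ℕ}
  (heven : ∀ n, 1 ≤ n → f (2 * n) = A * f n + b₀) (hodd : ∀ n, 1 ≤ n → f (2 * n + 1) = b₁)
include heven hodd

lemma f_two_pow_mul_add {M c i : ℕ} (hc : 1 ≤ c) (hi₀ : 0 < i) (hi : i < 2 ^ M) :
    f (2 ^ M * c + i) = f (2 ^ M + i) := by
  induction M generalizing i with
  | zero => omega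
  | succ M ih =>
    have hpos : 1 ≤ 2 ^ M * c := Nat.mul_pos (by positivity) hc
    obtain ⟨i, rfl | rfl⟩ := Nat.even_or_odd' i
    · rw [show 2 ^ (M + 1) * c + 2 * i = 2 * (2 ^ M * c + i) by ring,
        show 2 ^ (M + 1) + 2 * i = 2 * (2 ^ M + i) by ring, heven _ (by omega),
        heven _ (by omega), ih (by omega) (by rw [pow_succ] at hi; omega)]
    · rw [show 2 ^ (M + 1) * c + (2 * i + 1) = 2 * (2 ^ M * c + i) + 1 by ring,
        show 2 ^ (M + 1) + (2 * i + 1) = 2 * (2 ^ M + i) + 1 by ring, hodd _ (by omega),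
        hodd _ (by omega)]

lemma sum_Ico_block_le {M N a : ℕ} (hMN : M ≤ N) (ha : 2 ^ M ∣ a) :
    ∑ j ∈ Ico (a + 1) (a + 2 ^ M), f (2 ^ N + j) ≤ ghostMass f M := by
  obtain ⟨t, rfl⟩ := ha
  have h2N : 2 ^ N = 2 ^ M * 2 ^ (N - M) := by rw [← pow_add, Nat.add_sub_cancel' hMN]
  calc ∑ j ∈ Ico (2 ^ M * t + 1) (2 ^ M * t + 2 ^ M), f (2 ^ N + j)
      = ∑ i ∈ Ico 1 (2 ^ M), f (2 ^ N + (i + 2 ^ M * t)) := by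
        rw [sum_Ico_add' (fun j => f (2 ^ N + j)), add_comm 1, add_comm (2 ^ M)]
    _ = ∑ i ∈ Ico 1 (2 ^ M), f (2 ^ M + i) := by
        refine sum_congr rfl fun i hi => ?_
        rw [mem_Ico] at hi
        rw [show 2 ^ N + (i + 2 ^ M * t) = 2 ^ M * (2 ^ (N - M) + t) + i by rw [h2N]; ring,
          f_two_pow_mul_add heven hodd (Nat.le_add_right_of_le Nat.one_le_two_pow) hi.1 hi.2]
    _ ≤ ghostMass f M := sum_le_sum_of_subset fun i hi => mem_range.2 (mem_Ico.1 hi).2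

lemma sum_Ico_window_le {M N k : ℕ} (hMN : M ≤ N) (hk : 2 ^ M ∣ k) :
    ∑ j ∈ Ico (k + 1 - 2 ^ M) (k + 2 ^ M), f (2 ^ N + j) ≤
      f (2 ^ N + k) + 2 * ghostMass f M := by
  have hq : 0 < 2 ^ M := by positivity
  have hk' : k = 0 ∨ 2 ^ M ≤ k := (Nat.eq_zero_or_pos k).imp_right (Nat.le_of_dvd · hk)
  have hleft : ∑ j ∈ Ico (k + 1 - 2 ^ M) k, f (2 ^ N + j) ≤ ghostMass f M := by
    refine le_trans (sum_le_sum_of_subset fun j hj => ?_)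
      (sum_Ico_block_le heven hodd hMN (Nat.dvd_sub hk dvd_rfl))
    simp only [mem_Ico] at hj ⊢
    omega
  have hright := sum_Ico_block_le heven hodd hMN hk
  rw [← sum_Ico_consecutive _ (show k + 1 - 2 ^ M ≤ k by omega) (show k ≤ k + 2 ^ M by omega),
    sum_eq_sum_Ico_succ_bot (show k < k + 2 ^ M by omega)]
  omega

lemma ghostMass_succ (N : ℕ) :
    ghostMass f (N + 1) = A * ghostMass f N + 2 ^ N * (b₀ + b₁) := by
  have hpos : ∀ k, 1 ≤ 2 ^ N + k := fun k => Nat.le_add_right_of_le Nat.one_le_two_pow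
  calc ghostMass f (N + 1)
      = ∑ j ∈ range (2 ^ N), (f (2 * (2 ^ N + j)) + f (2 * (2 ^ N + j) + 1)) := by
        rw [ghostMass, pow_succ', sum_range_two_mul]
        exact sum_congr rfl fun j _ => by ring_nf
    _ = ∑ j ∈ range (2 ^ N), (A * f (2 ^ N + j) + (b₀ + b₁)) :=
        sum_congr rfl fun j _ => by rw [heven _ (hpos j), hodd _ (hpos j), add_assoc]
    _ = A * ghostMass f N + 2 ^ N * (b₀ + b₁) := by
        rw [sum_add_distrib, ← mul_sum, sum_const, card_range, smul_eq_mul, ghostMass]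

lemma pow_mul_ghostMass_le (M p : ℕ) : A ^ p * ghostMass f M ≤ ghostMass f (M + p) := by
  induction p with
  | zero => simp
  | succ p ih =>
    rw [← add_assoc, ghostMass_succ heven hodd, pow_succ', mul_assoc]
    exact le_add_right (Nat.mul_le_mul_left A ih)

lemma one_le_ghostMass (hA : 1 ≤ A) (hf1 : 1 ≤ f 1) (N : ℕ) : 1 ≤ ghostMass f N := by
  have h := pow_mul_ghostMass_le heven hodd 0 N
  rw [zero_add, show ghostMass f 0 = f 1 by simp [ghostMass]] at h
  exact le_trans (Nat.one_le_pow _ _ hA |>.trans (Nat.le_mul_of_pos_right _ hf1)) h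

lemma tendsto_ghostMass_div_pow (hA : 3 ≤ A) :
    Tendsto (fun N => (ghostMass f N : ℝ) / (A : ℝ) ^ N) atTop
      (𝓝 (f 1 + (b₀ + b₁ : ℝ) / (A - 2))) := by
  have hA' : (2 : ℝ) < A := by exact_mod_cast hA
  convert tendsto_div_pow_of_rec (u := fun N => (ghostMass f N : ℝ)) (b := b₀ + b₁)
    zero_le_two hA' (fun N => by rw [ghostMass_succ heven hodd]; push_cast; ring) using 3
  simp [ghostMass]

lemma tendsto_ghostApprox_singleton (hA : 3 ≤ A) (hf1 : 1 ≤ f 1) {n j : ℕ} (hj : j < 2 ^ n) :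
    Tendsto (fun N => ghostApprox f N {(j : ℝ) / 2 ^ n}) atTop
      (𝓝 (ENNReal.ofReal ((f (2 ^ n + j) + b₀ / (A - 1) : ℝ) /
        (A ^ n * (f 1 + (b₀ + b₁) / (A - 2) : ℝ))))) := by
  have hA' : (2 : ℝ) < A := by exact_mod_cast hA
  have hreal := ((tendsto_f_two_pow_mul_div_pow heven (by omega) (by omega : 1 ≤ 2 ^ n + j)).comp
    (tendsto_sub_atTop_nat n)).div ((tendsto_ghostMass_div_pow heven hodd hA).const_mul
      ((A : ℝ) ^ n)) (by positivity)
  refine (ENNReal.tendsto_ofReal hreal).congr' ?_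
  filter_upwards [eventually_ge_atTop n] with N hN
  have hmass : (0 : ℝ) < ghostMass f N := by
    exact_mod_cast one_le_ghostMass heven hodd (by omega) hf1 N
  rw [← natCast_mul_two_pow_sub_div hN, ghostApprox_singleton f (mul_two_pow_sub_lt hj hN),
    ← ENNReal.ofReal_natCast, ← ENNReal.ofReal_natCast, ← ENNReal.ofReal_div_of_pos hmass,
    show 2 ^ N + j * 2 ^ (N - n) = 2 ^ (N - n) * (2 ^ n + j) by
      rw [mul_add, ← pow_add, Nat.sub_add_cancel hN, mul_comm]]
  congr 1
  have hApow : (A : ℝ) ^ N = A ^ (N - n) * A ^ n := by rw [← pow_add, Nat.sub_add_cancel hN]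
  simp only [Pi.div_apply, Function.comp_apply]
  rw [hApow]
  field_simp

lemma exists_ghostApprox_ball_le (hA : 2 ≤ A) {n j : ℕ} (hj : j < 2 ^ n) {ε : ℝ≥0∞}
    (hε : 0 < ε) : ∃ r > 0, ∀ᶠ N in atTop,
      ghostApprox f N (ball ((j : ℝ) / 2 ^ n) r) ≤ ghostApprox f N {(j : ℝ) / 2 ^ n} + ε := by
  obtain ⟨p₀, hp₀⟩ :=
    ENNReal.exists_nat_gt (ENNReal.div_ne_top (by norm_num : (2 : ℝ≥0∞) ≠ ⊤) hε.ne')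
  set p := max n p₀
  have hεp : (2 : ℝ≥0∞) ≤ ε * A ^ p := by
    have : p₀ ≤ A ^ p := (le_max_right n p₀).trans (Nat.lt_pow_self hA).le
    rw [mul_comm, ← ENNReal.div_le_iff_le_mul (Or.inl hε.ne')
      (Or.inr (pow_ne_zero _ (Nat.cast_ne_zero.2 (by omega))))]
    exact hp₀.le.trans (by exact_mod_cast this)
  refine ⟨(2 ^ p)⁻¹, by positivity, eventually_atTop.2 ⟨p, fun N hN => ?_⟩⟩
  have hnN : n ≤ N := (le_max_left n p₀).trans hN
  have hr : ((2 ^ (N - p) : ℕ) : ℝ) / 2 ^ N = (2 ^ p)⁻¹ := by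
    rw [← one_mul (2 ^ (N - p)), natCast_mul_two_pow_sub_div hN]
    simp
  have hdvd : 2 ^ (N - p) ∣ j * 2 ^ (N - n) :=
    Dvd.dvd.mul_left (pow_dvd_pow 2 (by omega)) j
  have hmass : 2 * (ghostMass f (N - p) : ℝ≥0∞) ≤ ε * ghostMass f N :=
    calc 2 * (ghostMass f (N - p) : ℝ≥0∞) ≤ ε * A ^ p * ghostMass f (N - p) := by gcongr
      _ = ε * ((A ^ p * ghostMass f (N - p) : ℕ) : ℝ≥0∞) := by push_cast; ring
      _ ≤ ε * ghostMass f N := by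
        gcongr
        simpa [Nat.sub_add_cancel hN] using pow_mul_ghostMass_le heven hodd (N - p) p
  rw [← natCast_mul_two_pow_sub_div hnN, ← hr, ghostApprox_singleton f (mul_two_pow_sub_lt hj hnN)]
  calc _ ≤ _ := ghostApprox_ball_le f N _ _
    _ ≤ ((f (2 ^ N + j * 2 ^ (N - n)) + 2 * ghostMass f (N - p) : ℕ) : ℝ≥0∞) /
          ghostMass f N := by
        gcongr
        exact sum_Ico_window_le heven hodd (Nat.sub_le N p) hdvd
    _ = (f (2 ^ N + j * 2 ^ (N - n)) : ℝ≥0∞) / ghostMass f N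
          + 2 * (ghostMass f (N - p) : ℝ≥0∞) / ghostMass f N := by
        push_cast
        exact ENNReal.add_div
    _ ≤ _ := by
        gcongr
        exact ENNReal.div_le_of_le_mul hmass

theorem ghostMeasure_dyadic_atom (hA : 3 ≤ A) (hf1 : 1 ≤ f 1) {μ : Measure ℝ}
    [IsProbabilityMeasure μ] (hlim : WeakLimit (ghostApprox f) μ) {n j : ℕ} (hj : j < 2 ^ n) :
    μ {(j : ℝ) / 2 ^ n} = ENNReal.ofReal ((f (2 ^ n + j) + b₀ / (A - 1) : ℝ) /
        (A ^ n * (f 1 + (b₀ + b₁) / (A - 2) : ℝ))) :=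
  have (N : ℕ) : IsProbabilityMeasure (ghostApprox f N) :=
    isProbabilityMeasure_ghostApprox
      (Nat.one_le_iff_ne_zero.1 (one_le_ghostMass heven hodd (by omega) hf1 N))
  measure_singleton_eq_of_weakLimit hlim (tendsto_ghostApprox_singleton heven hodd hA hf1 hj)
    fun _ hε => exists_ghostApprox_ball_le heven hodd (by omega) hj hε

end GhostAtoms

theorem stmt_15_general (A₀ A₁ b₀ b₁ : ℕ)
    (f : ℕ → ℕ) (hf1 : 1 ≤ f 1)
    (heven : ∀ n, 1 ≤ n → f (2 * n) = A₀ * f n + b₀)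
    (hodd : ∀ n, 1 ≤ n → f (2 * n + 1) = A₁ * f n + b₁)
    (hA₁ : A₁ = 0) (hA₀ : 3 ≤ A₀)
    (μ : Measure ℝ) (hμ : IsProbabilityMeasure μ)
    (hlim : WeakLimit (ghostApprox f) μ) :
    μ {(0 : ℝ)} =
        ENNReal.ofReal (((f 1 : ℝ) + (b₀ : ℝ) / ((A₀ : ℝ) - 1)) /
          ((f 1 : ℝ) + ((b₀ : ℝ) + b₁) / ((A₀ : ℝ) - 2))) ∧
      ∀ n m : ℕ, 1 ≤ n → Odd m → m < 2 ^ n →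
        μ {((m : ℝ) / 2 ^ n)} =
          ENNReal.ofReal ((1 / ((f 1 : ℝ) + ((b₀ : ℝ) + b₁) / ((A₀ : ℝ) - 2))) *
            ((b₁ : ℝ) / (A₀ : ℝ) ^ n + (b₀ : ℝ) / ((A₀ : ℝ) ^ n * ((A₀ : ℝ) - 1)))) := by
  have hodd' : ∀ n, 1 ≤ n → f (2 * n + 1) = b₁ := fun n hn => by simpa [hA₁] using hodd n hn
  have hatom (n j : ℕ) (hj : j < 2 ^ n) :=
    ghostMeasure_dyadic_atom (b₁ := b₁) heven hodd' hA₀ hf1 hlim hj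
  refine ⟨by simpa using hatom 0 0 one_pos, fun n m hn hm hmn => ?_⟩
  obtain ⟨n, rfl⟩ := Nat.exists_eq_add_of_le' hn
  obtain ⟨i, rfl⟩ := hm
  have hfm : f (2 ^ (n + 1) + (2 * i + 1)) = b₁ := by
    rw [show 2 ^ (n + 1) + (2 * i + 1) = 2 * (2 ^ n + i) + 1 by ring,
      hodd' _ (Nat.le_add_right_of_le Nat.one_le_two_pow)]
  have hA1 : (A₀ : ℝ) - 1 ≠ 0 := by
    have : (3 : ℝ) ≤ A₀ := by exact_mod_cast hA₀
    linarith
  rw [hatom _ _ hmn, hfm]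
  congr 1
  field_simp

theorem stmt_15 (A₀ A₁ b₀ b₁ : ℕ) (hnz : ¬(A₀ = 0 ∧ A₁ = 0 ∧ b₀ = 0 ∧ b₁ = 0))
    (f : ℕ → ℕ) (hf1 : 1 ≤ f 1)
    (heven : ∀ n, 1 ≤ n → f (2 * n) = A₀ * f n + b₀)
    (hodd : ∀ n, 1 ≤ n → f (2 * n + 1) = A₁ * f n + b₁)
    (hb : 1 ≤ b₀ + b₁) (hA₁ : A₁ = 0) (hA₀ : 3 ≤ A₀)
    (μ : Measure ℝ) (hμ : IsProbabilityMeasure μ)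
    (hlim : WeakLimit (ghostApprox f) μ) :
    μ {(0 : ℝ)} =
        ENNReal.ofReal (((f 1 : ℝ) + (b₀ : ℝ) / ((A₀ : ℝ) - 1)) /
          ((f 1 : ℝ) + ((b₀ : ℝ) + b₁) / ((A₀ : ℝ) - 2))) ∧
      ∀ n m : ℕ, 1 ≤ n → Odd m → m < 2 ^ n →
        μ {((m : ℝ) / 2 ^ n)} =
          ENNReal.ofReal ((1 / ((f 1 : ℝ) + ((b₀ : ℝ) + b₁) / ((A₀ : ℝ) - 2))) *
            ((b₁ : ℝ) / (A₀ : ℝ) ^ n + (b₀ : ℝ) / ((A₀ : ℝ) ^ n * ((A₀ : ℝ) - 1)))) :=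
  stmt_15_general A₀ A₁ b₀ b₁ f hf1 heven hodd hA₁ hA₀ μ hμ hlim
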